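/- Lemma (face paths between inequivalent boundary faces are logical operators, Lemma 3 of the paper): Let f and f′ be boundary faces such that there exists NO face path with first face f and last face f′ whose vector χ lies in the Z-stabilizer subspace (i.e. f and f′ are not face-equivalent). Then for every face path (f₁, …, f_m; ν₁, …, ν_{m−1}) with m ≥ 2, f₁ = f and f_m = f′: (i) the vector χ(f₁, …, f_m) does not lie in the Z-stabilizer subspace, and (ii) for every volume ν the number of indices i with ν ∈ ι f_i is even. (Thus the corresponding Z-type operator commutes with every volume stabilizer but is not a stabilizer, i.e. it is a Z-type logical operator.) -/

import Mathlib

/-- A face path of length `m ≥ 1` in a 3D lattice: faces `f 0, …, f (m-1)` together with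
pairwise distinct volumes `v 0, …, v (m-2)` such that `v i` is incident on both
`f i` and `f (i+1)`.  Here `ι g` is the set of volumes a face `g` is incident on. -/
structure FacePath {Faces Volumes : Type*} (ι : Faces → Finset Volumes) (m : ℕ) where
  f : ℕ → Faces
  v : ℕ → Volumes
  one_le : 1 ≤ m
  mem_left : ∀ i, i + 1 < m → v i ∈ ι (f i)
  mem_right : ∀ i, i + 1 < m → v i ∈ ι (f (i + 1))
  distinct : ∀ i j, i + 1 < m → j + 1 < m → i ≠ j → v i ≠ v j

/-- `chi f m g` is the parity (in `ZMod 2`) of the number of indices `i < m` with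
`f i = g`; this is the `ZMod 2` vector of the list of faces `f 0, …, f (m-1)`. -/
def chi {Faces : Type*} [DecidableEq Faces] (f : ℕ → Faces) (m : ℕ) : Faces → ZMod 2 :=
  fun g => (((Finset.range m).filter (fun i => f i = g)).card : ZMod 2)

/-- The `ZMod 2` indicator vector of a finite set of faces. -/
def ind {Faces : Type*} [DecidableEq Faces] (A : Finset Faces) : Faces → ZMod 2 :=
  fun g => if g ∈ A then 1 else 0

/-- The `Z`-stabilizer subspace: the `ℤ/2`-span of the indicator vectors of the sets
`I e` of faces incident on each edge `e`. -/
def ZStab {Faces Edges : Type*} [DecidableEq Faces] (I : Edges → Finset Faces) :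
    Submodule (ZMod 2) (Faces → ZMod 2) :=
  Submodule.span (ZMod 2) {x : Faces → ZMod 2 | ∃ e : Edges, x = ind (I e)}

/-! A volume meets at most two faces of a face path, and when it meets one it meets exactly two:
an interior face `f i` already contains the two distinct path volumes `v (i-1)` and `v i`, so it
has no other volume, and a boundary face at an end of the path contains only its one path
volume. Hence every volume incident on the path is some `v j` and meets precisely `f j`, `f (j+1)`. -/

theorem Finset.eq_or_eq_of_card_le_two {α : Type*} {s : Finset α} {a b x : α}
    (hs : s.card ≤ 2) (hab : a ≠ b) (ha : a ∈ s) (hb : b ∈ s) (hx : x ∈ s) : x = a ∨ x = b := by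
  classical
  have hpair : ({a, b} : Finset α) = s :=
    Finset.eq_of_subset_of_card_le (Finset.insert_subset ha (Finset.singleton_subset_iff.2 hb))
      (by rw [Finset.card_pair hab]; exact hs)
  simpa [← hpair] using hx

namespace FacePath

variable {Faces Volumes : Type*} {ι : Faces → Finset Volumes} {m : ℕ} (p : FacePath ι m)

theorem eq_of_v_eq {j k : ℕ} (hj : j + 1 < m) (hk : k + 1 < m) (h : p.v j = p.v k) : j = k :=
  by_contra fun hne => p.distinct j k hj hk hne h

theorem mem_iff_exists_v_adjacent (hcard : ∀ g, (ι g).card ≤ 2) (hm : 2 ≤ m)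
    (hfirst : (ι (p.f 0)).card = 1) (hlast : (ι (p.f (m - 1))).card = 1)
    {i : ℕ} (hi : i < m) {ν : Volumes} :
    ν ∈ ι (p.f i) ↔ ∃ j, j + 1 < m ∧ p.v j = ν ∧ (i = j ∨ i = j + 1) := by
  constructor
  · intro hν
    obtain rfl | hi0 := Nat.eq_zero_or_pos i
    · exact ⟨0, by omega, Finset.card_le_one.1 hfirst.le _ (p.mem_left 0 (by omega)) _ hν,
        Or.inl rfl⟩
    obtain rfl | hi' := (Nat.le_sub_one_of_lt hi).eq_or_lt
    · have hv := p.mem_right (m - 2) (by omega)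
      rw [show m - 2 + 1 = m - 1 by omega] at hv
      exact ⟨m - 2, by omega, Finset.card_le_one.1 hlast.le _ hv _ hν, Or.inr (by omega)⟩
    have hprev := p.mem_right (i - 1) (by omega)
    rw [Nat.sub_add_cancel hi0] at hprev
    have hne : p.v (i - 1) ≠ p.v i := fun h => by
      have := p.eq_of_v_eq (by omega) (by omega) h
      omega
    rcases Finset.eq_or_eq_of_card_le_two (hcard _) hne hprev (p.mem_left i (by omega)) hν
      with rfl | rfl
    · exact ⟨i - 1, by omega, rfl, Or.inr (by omega)⟩
    · exact ⟨i, by omega, rfl, Or.inl rfl⟩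
  · rintro ⟨j, hj, rfl, rfl | rfl⟩
    · exact p.mem_left _ hj
    · exact p.mem_right j hj

theorem even_card_filter_mem [DecidableEq Volumes] (hcard : ∀ g, (ι g).card ≤ 2) (hm : 2 ≤ m)
    (hfirst : (ι (p.f 0)).card = 1) (hlast : (ι (p.f (m - 1))).card = 1)
    (ν : Volumes) :
    Even ((Finset.range m).filter (fun i => ν ∈ ι (p.f i))).card := by
  have hmem := fun i (hi : i < m) => p.mem_iff_exists_v_adjacent hcard hm hfirst hlast hi (ν := ν)
  by_cases hν : ∃ j, j + 1 < m ∧ p.v j = ν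
  · obtain ⟨j, hj, rfl⟩ := hν
    have hpair : (Finset.range m).filter (fun i => p.v j ∈ ι (p.f i)) = {j, j + 1} := by
      ext i
      simp only [Finset.mem_filter, Finset.mem_range, Finset.mem_insert, Finset.mem_singleton]
      constructor
      · rintro ⟨hi, hk⟩
        obtain ⟨k, hk, hvk, hik⟩ := (hmem i hi).1 hk
        have := p.eq_of_v_eq hk hj hvk
        omega
      · rintro (rfl | rfl)
        · exact ⟨by omega, p.mem_left i hj⟩
        · exact ⟨hj, p.mem_right j hj⟩
    rw [hpair, Finset.card_pair (by omega)]
    exact even_two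
  · have hempty : (Finset.range m).filter (fun i => ν ∈ ι (p.f i)) = ∅ :=
      Finset.filter_false_of_mem fun i hi hνi =>
        let ⟨k, hk, hvk, _⟩ := (hmem i (Finset.mem_range.1 hi)).1 hνi
        hν ⟨k, hk, hvk⟩
    rw [hempty]
    exact Even.zero

end FacePath

theorem face_path_between_inequivalent_boundaries_is_logical_general
    {Faces Volumes Edges : Type*}
    [DecidableEq Faces] [DecidableEq Volumes]
    (ι : Faces → Finset Volumes) (I : Edges → Finset Faces)
    (hcard : ∀ f, 1 ≤ (ι f).card ∧ (ι f).card ≤ 2)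
    (f f' : Faces) (hf : (ι f).card = 1) (hf' : (ι f').card = 1)
    (hnoteq : ¬ ∃ (m : ℕ) (p : FacePath ι m),
        p.f 0 = f ∧ p.f (m - 1) = f' ∧ chi p.f m ∈ ZStab I) :
    ∀ (m : ℕ), 2 ≤ m → ∀ p : FacePath ι m, p.f 0 = f → p.f (m - 1) = f' →
      chi p.f m ∉ ZStab I ∧
      ∀ ν : Volumes,
        Even (((Finset.range m).filter (fun i => ν ∈ ι (p.f i))).card) := by
  intro m hm p hfirst hlast
  refine ⟨fun hchi => hnoteq ⟨m, p, hfirst, hlast, hchi⟩, ?_⟩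
  subst hfirst hlast
  exact p.even_card_filter_mem (fun g => (hcard g).2) hm hf hf'

/-- Lemma 3 (face paths between inequivalent boundary faces give logical operators):
if `f` and `f'` are boundary faces that are not face-equivalent — no face path from `f`
to `f'` has its `χ`-vector in the `Z`-stabilizer subspace — then for every face path from
`f` to `f'` the vector `χ` is not in the `Z`-stabilizer subspace, and every volume is
incident on an even number of faces of the path. -/
theorem face_path_between_inequivalent_boundaries_is_logical
    {Faces Volumes Edges : Type*} [Fintype Faces] [Fintype Volumes] [Fintype Edges]
    [DecidableEq Faces] [DecidableEq Volumes]
    (ι : Faces → Finset Volumes) (I : Edges → Finset Faces)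
    (hcard : ∀ f, 1 ≤ (ι f).card ∧ (ι f).card ≤ 2)
    (f f' : Faces) (hf : (ι f).card = 1) (hf' : (ι f').card = 1)
    (hnoteq : ¬ ∃ (m : ℕ) (p : FacePath ι m),
        p.f 0 = f ∧ p.f (m - 1) = f' ∧ chi p.f m ∈ ZStab I) :
    ∀ (m : ℕ), 2 ≤ m → ∀ p : FacePath ι m, p.f 0 = f → p.f (m - 1) = f' →
      chi p.f m ∉ ZStab I ∧
      ∀ ν : Volumes,
        Even (((Finset.range m).filter (fun i => ν ∈ ι (p.f i))).card) :=
  face_path_between_inequivalent_boundaries_is_logical_general ι I hcard f f' hf hf' hnoteq
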